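/- Let v_n(a) denote the number of Catalan words of length n avoiding the vincular pattern 21-3 whose last letter is a, with v_n(a) = 0 unless n ≥ 1 and 1 ≤ a ≤ n. Then v_1(1) = 1, v_n(1) = Σ_{j=1}^{n−1} v_{n−1}(j) for all n ≥ 2, and for all n ≥ 2 and 2 ≤ a ≤ n: v_n(a) = Σ_{j=a−1}^{n−1} v_{n−1}(j) − Σ_{j=2}^{a−1} Σ_{m=j+1}^{n−a+1} binom(m−2, j−1) · v_{n−m}(a−1), where empty sums are 0 and binom denotes the binomial coefficient. -/

import Mathlib

/-- A Catalan word: a word of positive integers starting with 1 in which each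
letter exceeds its predecessor by at most 1. -/
def IsCatalanWord {n : ℕ} (w : Fin n → ℕ) : Prop :=
  (∀ i, 1 ≤ w i) ∧ (∀ h : 0 < n, w ⟨0, h⟩ = 1) ∧
  ∀ i : ℕ, ∀ h : i + 1 < n, w ⟨i + 1, h⟩ ≤ w ⟨i, by omega⟩ + 1

/-- `w` contains the vincular pattern 21-3: there are indices `i` and `k` with
`i + 1 < k`, `w i > w (i+1)` and `w k > w i`. -/
def Contains21_3 {n : ℕ} (w : Fin n → ℕ) : Prop :=
  ∃ i k : ℕ, ∃ hk : k < n, ∃ hik : i + 1 < k,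
    w ⟨i + 1, by omega⟩ < w ⟨i, by omega⟩ ∧ w ⟨i, by omega⟩ < w ⟨k, hk⟩

/-- `v n a`: the number of Catalan words of length `n` avoiding 21-3 whose last
letter is `a` (zero in degenerate cases). -/
noncomputable def v (n a : ℕ) : ℕ :=
  Set.ncard {w : Fin n → ℕ | IsCatalanWord w ∧ ¬ Contains21_3 w ∧
    ∃ h : 0 < n, w ⟨n - 1, by omega⟩ = a}

/-!
Write a Catalan word of length `M + 1` ending in `a` as a word `u` of length `M` followed by `a`.
It is a Catalan word iff `u` ends in a letter `≥ a - 1`, and it avoids 21-3 iff `u` does and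
has no descent `u p > u (p + 1)` with `u p < a`. For `a = 1` no such descent exists. For `a ≥ 2`
every such `u` ends in `a - 1`, and cutting it after its last descent splits it into an avoiding
word of length `M + 1 - m` ending in `a - 1`, followed by a staircase of length `m - 1` that
starts at `a - j` and climbs back to `a - 1` by steps `0` or `1`. The staircase is determined by
which `j - 1` of its `m - 2` steps go up, so there are `binom(m - 2, j - 1) * v (M + 1 - m) (a - 1)`
such `u` for each `(j, m)`; subtracting them gives the recurrence.
-/

open Finset

namespace CatalanWord21_3

/-- Words are handled as sequences `ℕ → ℕ` padded with zeros, so that prefixes and one-letter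
extensions need no casts between `Fin` types. -/
def toSeq {n : ℕ} (w : Fin n → ℕ) (i : ℕ) : ℕ := if h : i < n then w ⟨i, h⟩ else 0

structure IsCatalanSeq (n : ℕ) (f : ℕ → ℕ) : Prop where
  eq_zero : ∀ i, n ≤ i → f i = 0
  one_le : ∀ i, i < n → 1 ≤ f i
  map_zero : 0 < n → f 0 = 1
  succ_le : ∀ i, i + 1 < n → f (i + 1) ≤ f i + 1

def HasPattern (n : ℕ) (f : ℕ → ℕ) : Prop :=
  ∃ i k, k < n ∧ i + 1 < k ∧ f (i + 1) < f i ∧ f i < f k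

def avoiders (n a : ℕ) : Set (ℕ → ℕ) :=
  {f | IsCatalanSeq n f ∧ ¬ HasPattern n f ∧ 0 < n ∧ f (n - 1) = a}

section toSeq

variable {n : ℕ}

lemma toSeq_of_lt (w : Fin n → ℕ) {i : ℕ} (h : i < n) : toSeq w i = w ⟨i, h⟩ := dif_pos h

lemma toSeq_injective : Function.Injective (toSeq (n := n)) := by
  intro w w' h
  funext i
  simpa [toSeq_of_lt _ i.2] using congrFun h i

lemma toSeq_restrict {f : ℕ → ℕ} (hf : ∀ i, n ≤ i → f i = 0) :
    toSeq (fun i : Fin n => f i) = f := by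
  funext i
  by_cases h : i < n
  · rw [toSeq_of_lt _ h]
  · rw [toSeq, dif_neg h, hf i (by omega)]

lemma isCatalanSeq_toSeq_iff {w : Fin n → ℕ} :
    IsCatalanSeq n (toSeq w) ↔ IsCatalanWord w := by
  constructor
  · rintro ⟨-, hpos, h0, hstep⟩
    refine ⟨fun i => ?_, fun h => ?_, fun i h => ?_⟩
    · simpa [toSeq_of_lt _ i.2] using hpos i i.2
    · simpa [toSeq_of_lt _ h] using h0 h
    · simpa [toSeq_of_lt _ h, toSeq_of_lt _ (Nat.lt_of_succ_lt h)] using hstep i h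
  · rintro ⟨hpos, h0, hstep⟩
    refine ⟨fun i hi => dif_neg (by omega), fun i hi => ?_, fun h => ?_, fun i h => ?_⟩
    · simpa [toSeq_of_lt _ hi] using hpos ⟨i, hi⟩
    · simpa [toSeq_of_lt _ h] using h0 h
    · simpa [toSeq_of_lt _ h, toSeq_of_lt _ (Nat.lt_of_succ_lt h)] using hstep i h

lemma hasPattern_toSeq_iff {w : Fin n → ℕ} : HasPattern n (toSeq w) ↔ Contains21_3 w := by
  refine exists₂_congr fun i k =>
    ⟨fun ⟨hk, hik, h⟩ => ⟨hk, hik, ?_⟩, fun ⟨hk, hik, h⟩ => ⟨hk, hik, ?_⟩⟩ <;>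
  simpa only [toSeq_of_lt _ hk, toSeq_of_lt _ (show i < n by omega),
    toSeq_of_lt _ (show i + 1 < n by omega)] using h

lemma v_eq_ncard_avoiders (a : ℕ) : v n a = (avoiders n a).ncard := by
  have himage : avoiders n a = toSeq '' {w : Fin n → ℕ |
      IsCatalanWord w ∧ ¬ Contains21_3 w ∧ ∃ h : 0 < n, w ⟨n - 1, by omega⟩ = a} := by
    ext f
    constructor
    · rintro ⟨hf, hpat, hn, hlast⟩
      have hg : toSeq (fun i : Fin n => f i) = f := toSeq_restrict hf.eq_zero
      refine ⟨_, ?_, hg⟩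
      rw [← hg] at hf hpat hlast
      exact ⟨isCatalanSeq_toSeq_iff.mp hf, mt hasPattern_toSeq_iff.mpr hpat, hn,
        by rwa [toSeq_of_lt _ (by omega)] at hlast⟩
    · rintro ⟨w, ⟨hw, hpat, hn, hlast⟩, rfl⟩
      exact ⟨isCatalanSeq_toSeq_iff.mpr hw, mt hasPattern_toSeq_iff.mp hpat, hn,
        by rwa [toSeq_of_lt _ (by omega)]⟩
  rw [himage, Set.ncard_image_of_injective _ toSeq_injective]
  rfl

end toSeq

namespace IsCatalanSeq

variable {n : ℕ} {f : ℕ → ℕ}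

lemma le_add (hf : IsCatalanSeq n f) {i t : ℕ} (h : i + t < n) : f (i + t) ≤ f i + t := by
  induction t with
  | zero => simp
  | succ t ih =>
    have := hf.succ_le (i + t) (by omega)
    have := ih (by omega)
    rw [← add_assoc]
    omega

lemma le_succ_self (hf : IsCatalanSeq n f) {i : ℕ} (h : i < n) : f i ≤ i + 1 := by
  have := hf.le_add (i := 0) (t := i) (by omega)
  rw [zero_add, hf.map_zero (by omega)] at this
  omega

lemma indicator (hf : IsCatalanSeq n f) {L : ℕ} (hL0 : 0 < L) (hL : L ≤ n) :
    IsCatalanSeq L ((Set.Iio L).indicator f) := by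
  have hlt : ∀ i < L, (Set.Iio L).indicator f i = f i :=
    fun i hi => Set.indicator_of_mem (Set.mem_Iio.mpr hi) f
  refine ⟨fun i hi => Set.indicator_of_notMem (by simpa using hi) f, fun i hi => ?_,
    fun _ => ?_, fun i hi => ?_⟩
  · rw [hlt i hi]; exact hf.one_le i (by omega)
  · rw [hlt 0 hL0]; exact hf.map_zero (by omega)
  · rw [hlt i (by omega), hlt (i + 1) hi]; exact hf.succ_le i (by omega)

lemma update (hf : IsCatalanSeq n f) (hn : 0 < n) {a : ℕ} (ha : 1 ≤ a)
    (haf : a - 1 ≤ f (n - 1)) : IsCatalanSeq (n + 1) (Function.update f n a) := by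
  refine ⟨fun i hi => ?_, fun i hi => ?_, fun _ => ?_, fun i hi => ?_⟩ <;>
    simp only [Function.update_apply]
  · rw [if_neg (by omega), hf.eq_zero i (by omega)]
  · split_ifs
    · exact ha
    · exact hf.one_le i (by omega)
  · rw [if_neg (by omega), hf.map_zero hn]
  · split_ifs
    · omega
    · rw [show i = n - 1 by omega]; omega
    · omega
    · exact hf.succ_le i (by omega)

end IsCatalanSeq

lemma finite_setOf_isCatalanSeq (n : ℕ) : {f | IsCatalanSeq n f}.Finite := by
  refine ((Set.Finite.pi fun _ : Fin n => Set.finite_Iic n).image toSeq).subset ?_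
  intro f hf
  refine ⟨fun i => f i, fun i _ => ?_, toSeq_restrict hf.eq_zero⟩
  have := hf.le_succ_self i.2
  simp only [Set.mem_Iic]
  omega

section HasPattern

open Function

variable {n : ℕ} {f g : ℕ → ℕ}

lemma HasPattern.of_eqOn {L : ℕ} (hfg : ∀ i < L, f i = g i) (hL : L ≤ n)
    (h : HasPattern L f) : HasPattern n g := by
  obtain ⟨i, k, hk, hik, h1, h2⟩ := h
  refine ⟨i, k, by omega, hik, ?_, ?_⟩
  · rwa [← hfg i (by omega), ← hfg (i + 1) (by omega)]
  · rwa [← hfg i (by omega), ← hfg k hk]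

lemma apply_le_of_not_hasPattern (hf : ¬ HasPattern n f) {i k : ℕ}
    (hd : f (i + 1) < f i) (hik : i + 1 < k) (hk : k < n) : f k ≤ f i :=
  not_lt.mp fun h => hf ⟨i, k, hk, hik, hd, h⟩

lemma hasPattern_update_iff (hf : ¬ HasPattern n f) {a : ℕ} :
    HasPattern (n + 1) (update f n a) ↔ ∃ p, p + 1 < n ∧ f (p + 1) < f p ∧ f p < a := by
  constructor
  · rintro ⟨i, k, hk, hik, h1, h2⟩
    rw [update_of_ne (by omega), update_of_ne (by omega)] at h1
    rw [update_of_ne (by omega)] at h2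
    by_cases hkn : k < n
    · rw [update_of_ne (by omega)] at h2
      exact absurd ⟨i, k, hkn, hik, h1, h2⟩ hf
    · rw [show k = n by omega, update_self] at h2
      exact ⟨i, by omega, h1, h2⟩
  · rintro ⟨p, hp, h1, h2⟩
    refine ⟨p, n, by omega, hp, ?_, ?_⟩
    · rwa [update_of_ne (by omega), update_of_ne (by omega)]
    · rwa [update_of_ne (by omega), update_self]

lemma update_injOn (a : ℕ) : Set.InjOn (fun f : ℕ → ℕ => update f n a) {f | f n = 0} := by
  intro f hf g hg hfg
  funext i
  by_cases hi : i = n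
  · rw [hi, hf, hg]
  · simpa [update_of_ne hi] using congrFun hfg i

end HasPattern

def avoidersGE (M c : ℕ) : Set (ℕ → ℕ) :=
  {f | IsCatalanSeq M f ∧ ¬ HasPattern M f ∧ 0 < M ∧ c ≤ f (M - 1)}

def badExtensions (M a : ℕ) : Set (ℕ → ℕ) :=
  {f | f ∈ avoidersGE M (a - 1) ∧ HasPattern (M + 1) (Function.update f M a)}

lemma finite_avoidersGE (M c : ℕ) : (avoidersGE M c).Finite :=
  (finite_setOf_isCatalanSeq M).subset fun _ hf => hf.1

lemma ncard_avoidersGE (M c : ℕ) : (avoidersGE M c).ncard = ∑ j ∈ Icc c M, v M j := by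
  classical
  have hfin := finite_avoidersGE M c
  have hmaps : Set.MapsTo (fun f : ℕ → ℕ => f (M - 1)) (hfin.toFinset : Set (ℕ → ℕ))
      (Icc c M : Set ℕ) := by
    intro f hf
    obtain ⟨hcat, -, hM, hc⟩ := hfin.mem_toFinset.mp hf
    have := hcat.le_succ_self (i := M - 1) (by omega)
    simp only [coe_Icc, Set.mem_Icc]
    omega
  rw [Set.ncard_eq_toFinset_card _ hfin, card_eq_sum_card_fiberwise hmaps]
  refine sum_congr rfl fun j hj => ?_
  rw [v_eq_ncard_avoiders, ← Set.ncard_coe_finset]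
  congr 1
  ext f
  simp only [coe_filter, Set.Finite.mem_toFinset, avoidersGE, avoiders, Set.mem_ofPred_eq]
  constructor
  · rintro ⟨⟨h1, h2, h3, -⟩, h4⟩
    exact ⟨h1, h2, h3, h4⟩
  · rintro ⟨h1, h2, h3, h4⟩
    exact ⟨⟨h1, h2, h3, h4 ▸ (mem_Icc.mp hj).1⟩, h4⟩

lemma avoiders_succ {M a : ℕ} (hM : 0 < M) (ha : 1 ≤ a) :
    avoiders (M + 1) a = (fun f : ℕ → ℕ => Function.update f M a) ''
      (avoidersGE M (a - 1) \ badExtensions M a) := by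
  ext g
  constructor
  · rintro ⟨hg, hpat, -, hlast⟩
    rw [Nat.add_sub_cancel] at hlast
    have hlt : ∀ i < M, (Set.Iio M).indicator g i = g i :=
      fun i hi => Set.indicator_of_mem (Set.mem_Iio.mpr hi) g
    have hupd : Function.update ((Set.Iio M).indicator g) M a = g := by
      funext i
      rcases lt_trichotomy i M with hi | rfl | hi
      · rw [Function.update_of_ne hi.ne, hlt i hi]
      · rw [Function.update_self, hlast]
      · simp [Function.update_of_ne hi.ne', hi.not_gt, hg.eq_zero i (by omega)]
    have hstep := hg.succ_le (M - 1) (by omega)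
    rw [show M - 1 + 1 = M by omega, hlast, ← hlt (M - 1) (by omega)] at hstep
    refine ⟨_, ⟨⟨hg.indicator hM (by omega), fun h => hpat (h.of_eqOn hlt (by omega)), hM,
      by omega⟩, fun h => hpat (hupd ▸ h.2)⟩, hupd⟩
  · rintro ⟨f, ⟨⟨hf, hpat, -, hlast⟩, hbad⟩, rfl⟩
    exact ⟨hf.update hM ha hlast, fun h => hbad ⟨⟨hf, hpat, hM, hlast⟩, h⟩, by omega,
      by simp⟩

lemma ncard_avoiders_succ {M a : ℕ} (hM : 0 < M) (ha : 1 ≤ a) :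
    ((avoiders (M + 1) a).ncard : ℤ) =
      (avoidersGE M (a - 1)).ncard - (badExtensions M a).ncard := by
  have hsub : badExtensions M a ⊆ avoidersGE M (a - 1) := fun _ hf => hf.1
  have hfin := finite_avoidersGE M (a - 1)
  rw [avoiders_succ hM ha, Set.InjOn.ncard_image, Set.ncard_sdiff hsub (hfin.subset hsub),
    Nat.cast_sub (Set.ncard_le_ncard hsub hfin)]
  exact (update_injOn a).mono fun f hf => hf.1.1.eq_zero M le_rfl

def stairs (c : ℕ) (S : Finset ℕ) (t : ℕ) : ℕ := c + Nat.count (· ∈ S) t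

section stairs

variable {c : ℕ} {S : Finset ℕ}

@[simp] lemma stairs_zero : stairs c S 0 = c := by simp [stairs]

lemma stairs_succ (t : ℕ) : stairs c S (t + 1) = stairs c S t + if t ∈ S then 1 else 0 := by
  simp only [stairs, Nat.count_succ, add_assoc]

lemma stairs_le_succ (t : ℕ) : stairs c S t ≤ stairs c S (t + 1) := by
  rw [stairs_succ]; omega

lemma stairs_mono : Monotone (stairs c S) := monotone_nat_of_le_succ stairs_le_succ

lemma stairs_le (t : ℕ) : stairs c S t ≤ c + S.card := by
  rw [stairs, Nat.count_eq_card_filter_range]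
  exact Nat.add_le_add_left (card_le_card fun _ hx => (mem_filter.mp hx).2) c

lemma stairs_of_subset_range {r : ℕ} (hS : S ⊆ range r) : stairs c S r = c + S.card := by
  rw [stairs, Nat.count_eq_card_filter_range, filter_mem_eq_inter, inter_eq_right.mpr hS]

lemma mem_iff_stairs_succ (t : ℕ) : t ∈ S ↔ stairs c S (t + 1) = stairs c S t + 1 := by
  rw [stairs_succ]
  split_ifs with h <;> simp [h]

end stairs

lemma eq_stairs_of_steps {y : ℕ → ℕ} {r : ℕ} (hmono : ∀ t < r, y t ≤ y (t + 1))
    (hstep : ∀ t < r, y (t + 1) ≤ y t + 1) :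
    ∀ t ≤ r, y t = stairs (y 0) ((range r).filter fun s => y s < y (s + 1)) t := by
  intro t ht
  induction t with
  | zero => simp
  | succ t ih =>
    have := hmono t (by omega)
    have := hstep t (by omega)
    rw [stairs_succ, ← ih (by omega)]
    simp only [mem_filter, mem_range]
    split_ifs <;> omega

def appendStairs (L M c : ℕ) (Sx : Finset ℕ × (ℕ → ℕ)) (i : ℕ) : ℕ :=
  if i < L then Sx.2 i else if i < M then stairs c Sx.1 (i - L) else 0

section appendStairs

variable {L M c : ℕ} {S : Finset ℕ} {x : ℕ → ℕ} {i : ℕ}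

lemma appendStairs_of_lt (h : i < L) : appendStairs L M c (S, x) i = x i := if_pos h

lemma appendStairs_of_le_of_lt (h₁ : L ≤ i) (h₂ : i < M) :
    appendStairs L M c (S, x) i = stairs c S (i - L) := by
  rw [appendStairs, if_neg (by omega), if_pos h₂]

lemma appendStairs_of_le (hLM : L ≤ M) (h : M ≤ i) : appendStairs L M c (S, x) i = 0 := by
  rw [appendStairs, if_neg (by omega), if_neg (by omega)]

lemma appendStairs_le_succ (h₁ : L ≤ i) (h₂ : i + 1 < M) :
    appendStairs L M c (S, x) i ≤ appendStairs L M c (S, x) (i + 1) := by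
  rw [appendStairs_of_le_of_lt h₁ (by omega), appendStairs_of_le_of_lt (by omega) h₂,
    show i + 1 - L = i - L + 1 by omega]
  exact stairs_le_succ _

lemma appendStairs_le (h : L ≤ i) : appendStairs L M c (S, x) i ≤ c + S.card := by
  by_cases hi : i < M
  · rw [appendStairs_of_le_of_lt h hi]; exact stairs_le _
  · rw [appendStairs, if_neg (by omega), if_neg hi]; omega

lemma isCatalanSeq_appendStairs (hx : IsCatalanSeq L x) (hL : 0 < L) (hLM : L ≤ M)
    (hc : 1 ≤ c) (hcx : c ≤ x (L - 1) + 1) : IsCatalanSeq M (appendStairs L M c (S, x)) := by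
  refine ⟨fun i hi => appendStairs_of_le hLM hi, fun i hi => ?_, fun _ => ?_, fun i hi => ?_⟩
  · rcases lt_or_ge i L with h | h
    · rw [appendStairs_of_lt h]; exact hx.one_le i h
    · rw [appendStairs_of_le_of_lt h hi]
      exact hc.trans (stairs_mono (Nat.zero_le _))
  · rw [appendStairs_of_lt hL]; exact hx.map_zero hL
  · rcases lt_trichotomy (i + 1) L with h | h | h
    · rw [appendStairs_of_lt h, appendStairs_of_lt (by omega)]; exact hx.succ_le i h
    · rw [appendStairs_of_le_of_lt h.ge hi, appendStairs_of_lt (by omega), h, Nat.sub_self,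
        stairs_zero, show i = L - 1 by omega]
      exact hcx
    · rw [appendStairs_of_le_of_lt (by omega) hi, appendStairs_of_le_of_lt (by omega) (by omega),
        show i + 1 - L = i - L + 1 by omega, stairs_succ]
      split_ifs <;> omega

lemma not_hasPattern_appendStairs (hx : ¬ HasPattern L x) (hS : c + S.card ≤ x (L - 1)) :
    ¬ HasPattern M (appendStairs L M c (S, x)) := by
  have hle : ∀ k, L ≤ k → appendStairs L M c (S, x) k ≤ c + S.card :=
    fun _ => appendStairs_le
  rintro ⟨i, k, hk, hik, hd, hlt⟩
  rcases lt_trichotomy (i + 1) L with h | h | h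
  · rw [appendStairs_of_lt h, appendStairs_of_lt (by omega)] at hd
    rw [appendStairs_of_lt (show i < L by omega)] at hlt
    by_cases hkL : k < L
    · rw [appendStairs_of_lt hkL] at hlt
      exact hx ⟨i, k, hkL, hik, hd, hlt⟩
    · have := hle k (by omega)
      by_cases hi : i + 1 = L - 1
      · rw [hi] at hd
        omega
      · have := apply_le_of_not_hasPattern hx hd (k := L - 1) (by omega) (by omega)
        omega
  · rw [appendStairs_of_lt (show i < L by omega), show i = L - 1 by omega] at hlt
    have := hle k (by omega)
    omega
  · exact (appendStairs_le_succ (by omega) (by omega)).not_gt hd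

lemma appendStairs_injOn (L M c : ℕ) : Set.InjOn (appendStairs L M c)
    {Sx | Sx.1 ⊆ range (M - 1 - L) ∧ ∀ i, L ≤ i → Sx.2 i = 0} := by
  rintro ⟨S, x⟩ ⟨hS, hx⟩ ⟨S', x'⟩ ⟨hS', hx'⟩ h
  have hstairs : ∀ {T : Finset ℕ} {y : ℕ → ℕ} {t : ℕ}, L + t < M →
      stairs c T t = appendStairs L M c (T, y) (L + t) := fun ht => by
    rw [appendStairs_of_le_of_lt (by omega) ht, Nat.add_sub_cancel_left]
  rw [Prod.mk.injEq]
  constructor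
  · ext t
    by_cases ht : t < M - 1 - L
    · rw [mem_iff_stairs_succ (c := c), mem_iff_stairs_succ (c := c) (S := S'),
        hstairs (T := S) (y := x) (t := t) (by omega),
        hstairs (T := S) (y := x) (t := t + 1) (by omega),
        hstairs (T := S') (y := x') (t := t) (by omega),
        hstairs (T := S') (y := x') (t := t + 1) (by omega), h]
    · exact iff_of_false (fun h => ht (mem_range.mp (hS h))) (fun h => ht (mem_range.mp (hS' h)))
  · funext i
    rcases lt_or_ge i L with hi | hi
    · simpa only [appendStairs_of_lt hi] using congrFun h i
    · exact (hx i hi).trans (hx' i hi).symm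

end appendStairs

def lastDescent (M : ℕ) (f : ℕ → ℕ) : ℕ :=
  Nat.findGreatest (fun p => p + 1 < M ∧ f (p + 1) < f p) M

section lastDescent

variable {M : ℕ} {f : ℕ → ℕ}

lemma lastDescent_spec {p : ℕ} (hp : p + 1 < M) (hd : f (p + 1) < f p) :
    p ≤ lastDescent M f ∧ lastDescent M f + 1 < M ∧
      f (lastDescent M f + 1) < f (lastDescent M f) :=
  ⟨Nat.le_findGreatest (by omega) ⟨hp, hd⟩,
    Nat.findGreatest_spec (P := fun p => p + 1 < M ∧ _) (by omega : p ≤ M) ⟨hp, hd⟩⟩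

lemma le_succ_of_lastDescent_lt {q : ℕ} (hq : lastDescent M f < q) (hqM : q + 1 < M) :
    f q ≤ f (q + 1) :=
  not_lt.mp fun hd => Nat.findGreatest_is_greatest hq (by omega) ⟨hqM, hd⟩

end lastDescent

lemma lastDescent_appendStairs {L M c : ℕ} {S : Finset ℕ} {x : ℕ → ℕ} (hL : 0 < L)
    (hLM : L < M) (hc : c < x (L - 1)) : lastDescent M (appendStairs L M c (S, x)) = L - 1 := by
  refine Nat.findGreatest_eq_iff.mpr ⟨by omega, fun _ => ⟨by omega, ?_⟩, ?_⟩
  · rw [show L - 1 + 1 = L by omega, appendStairs_of_le_of_lt le_rfl hLM,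
      appendStairs_of_lt (show L - 1 < L by omega), Nat.sub_self, stairs_zero]
    exact hc
  · rintro q hq - ⟨hqM, hd⟩
    exact (appendStairs_le_succ (by omega) hqM).not_gt hd

lemma badExtensions_lastDescent {M a : ℕ} {f : ℕ → ℕ} (hf : f ∈ badExtensions M a) :
    lastDescent M f + 1 < M ∧ f (lastDescent M f + 1) < a - 1 ∧
      f (lastDescent M f) = a - 1 ∧ f (M - 1) = a - 1 := by
  obtain ⟨⟨-, hpat, -, hlast⟩, hbad⟩ := hf
  obtain ⟨p₀, hp₀, hd₀, hlt₀⟩ := (hasPattern_update_iff hpat).mp hbad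
  obtain ⟨hle, hp, hd⟩ := lastDescent_spec hp₀ hd₀
  set p := lastDescent M f
  have hpa : f p < a := by
    rcases Nat.lt_or_ge (p₀ + 1) p with h | h
    · have := apply_le_of_not_hasPattern hpat hd₀ h (by omega)
      omega
    · rcases (show p = p₀ ∨ p = p₀ + 1 by omega) with h | h <;> rw [h] <;> omega
  have hpM : p + 1 < M - 1 := by
    by_contra h
    rw [show M - 1 = p + 1 by omega] at hlast
    omega
  have := apply_le_of_not_hasPattern hpat hd hpM (by omega)
  omega

/-- `⟨j, m⟩` as in the recurrence: the word is cut after its last descent `p`, where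
`m = M - p`, and the letter following the descent is `a - j`. -/
def descentKey (M a : ℕ) (f : ℕ → ℕ) : (_ : ℕ) × ℕ :=
  ⟨a - f (lastDescent M f + 1), M - lastDescent M f⟩

lemma descentKey_mem {M a : ℕ} {f : ℕ → ℕ} (hf : f ∈ badExtensions M a) :
    descentKey M a f ∈ (Icc 2 (a - 1)).sigma fun j => Icc (j + 1) (M + 2 - a) := by
  simp only [descentKey, mem_sigma, mem_Icc]
  obtain ⟨hp, hdesc, hpa, hlast⟩ := badExtensions_lastDescent hf
  have hcat := hf.1.1
  set p := lastDescent M f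
  have h1 := hcat.one_le (p + 1) hp
  have h2 := hcat.le_succ_self (i := p) (by omega)
  have h3 := hcat.le_add (i := p + 1) (t := M - 2 - p) (by omega)
  rw [show p + 1 + (M - 2 - p) = M - 1 by omega] at h3
  omega

lemma appendStairs_mem_fiber {M a j m : ℕ} (hj : 2 ≤ j) (hja : j ≤ a - 1) (hm : 2 ≤ m)
    {S : Finset ℕ} (hS : S ⊆ range (m - 2)) (hSj : S.card = j - 1) {x : ℕ → ℕ}
    (hx : x ∈ avoiders (M + 1 - m) (a - 1)) :
    appendStairs (M + 1 - m) M (a - j) (S, x) ∈ badExtensions M a ∧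
      descentKey M a (appendStairs (M + 1 - m) M (a - j) (S, x)) = ⟨j, m⟩ := by
  obtain ⟨hxcat, hxpat, hL, hxlast⟩ := hx
  set L := M + 1 - m
  have hgL : appendStairs L M (a - j) (S, x) L = a - j := by
    rw [appendStairs_of_le_of_lt le_rfl (by omega), Nat.sub_self, stairs_zero]
  have hgL' : appendStairs L M (a - j) (S, x) (L - 1) = a - 1 := by
    rw [appendStairs_of_lt (by omega), hxlast]
  have hglast : appendStairs L M (a - j) (S, x) (M - 1) = a - 1 := by
    rw [appendStairs_of_le_of_lt (by omega) (by omega), show M - 1 - L = m - 2 by omega,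
      stairs_of_subset_range hS]
    omega
  have hpat := not_hasPattern_appendStairs (M := M) (c := a - j) (S := S) hxpat (by omega)
  refine ⟨⟨⟨isCatalanSeq_appendStairs hxcat hL (by omega) (by omega) (by omega), hpat,
    by omega, hglast.ge⟩, ?_⟩, ?_⟩
  · refine (hasPattern_update_iff hpat).mpr ⟨L - 1, by omega, ?_, by omega⟩
    rw [show L - 1 + 1 = L by omega, hgL, hgL']
    omega
  · rw [descentKey, lastDescent_appendStairs hL (by omega) (show a - j < x (L - 1) by omega),
      show L - 1 + 1 = L by omega, hgL]
    congr 1 <;> omega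

lemma exists_appendStairs_eq {M a j m : ℕ} {f : ℕ → ℕ} (hf : f ∈ badExtensions M a)
    (hkey : descentKey M a f = ⟨j, m⟩) :
    ∃ Sx ∈ (powersetCard (j - 1) (range (m - 2)) : Set (Finset ℕ)) ×ˢ
      avoiders (M + 1 - m) (a - 1), appendStairs (M + 1 - m) M (a - j) Sx = f := by
  obtain ⟨hp, hdesc, hpa, hlast⟩ := badExtensions_lastDescent hf
  obtain ⟨hcat, hpat, -, -⟩ := hf.1
  simp only [descentKey, Sigma.mk.injEq, heq_eq_eq] at hkey
  obtain ⟨rfl, rfl⟩ := hkey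
  set p := lastDescent M f
  rw [show M + 1 - (M - p) = p + 1 by omega, show a - (a - f (p + 1)) = f (p + 1) by omega]
  have hstairs := eq_stairs_of_steps (y := fun t => f (p + 1 + t)) (r := M - p - 2)
    (fun t ht => le_succ_of_lastDescent_lt (M := M) (by omega) (by omega))
    (fun t ht => hcat.succ_le (p + 1 + t) (by omega))
  simp only [add_zero] at hstairs
  set S := (range (M - p - 2)).filter fun s => f (p + 1 + s) < f (p + 1 + (s + 1))
  have hSr : S ⊆ range (M - p - 2) := filter_subset _ _
  have hlt : ∀ i < p + 1, (Set.Iio (p + 1)).indicator f i = f i :=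
    fun i hi => Set.indicator_of_mem (Set.mem_Iio.mpr hi) f
  refine ⟨(S, (Set.Iio (p + 1)).indicator f), Set.mk_mem_prod ?_ ?_, ?_⟩
  · have := hstairs _ le_rfl
    rw [stairs_of_subset_range hSr, show p + 1 + (M - p - 2) = M - 1 by omega] at this
    exact mem_powersetCard.mpr ⟨hSr, by omega⟩
  · refine ⟨hcat.indicator (by omega) (by omega), fun h => hpat (h.of_eqOn hlt (by omega)),
      by omega, ?_⟩
    rw [Nat.add_sub_cancel, hlt p (by omega), hpa]
  · funext i
    rcases lt_or_ge i (p + 1) with h | h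
    · rw [appendStairs_of_lt h, hlt i h]
    rcases lt_or_ge i M with h' | h'
    · rw [appendStairs_of_le_of_lt h h', ← hstairs _ (by omega), Nat.add_sub_cancel' h]
    · rw [appendStairs_of_le (by omega) h', hcat.eq_zero i h']

lemma ncard_fiber_descentKey {M a j m : ℕ} (hj : 2 ≤ j) (hja : j ≤ a - 1) (hm : 2 ≤ m) :
    {f | f ∈ badExtensions M a ∧ descentKey M a f = ⟨j, m⟩}.ncard =
      (m - 2).choose (j - 1) * v (M + 1 - m) (a - 1) := by
  have hfiber : {f | f ∈ badExtensions M a ∧ descentKey M a f = ⟨j, m⟩} =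
      appendStairs (M + 1 - m) M (a - j) '' ((powersetCard (j - 1) (range (m - 2)) :
        Set (Finset ℕ)) ×ˢ avoiders (M + 1 - m) (a - 1)) := by
    ext f
    constructor
    · rintro ⟨hf, hkey⟩
      exact exists_appendStairs_eq hf hkey
    · rintro ⟨⟨S, x⟩, ⟨hS, hx⟩, rfl⟩
      obtain ⟨hSr, hSj⟩ := mem_powersetCard.mp hS
      exact appendStairs_mem_fiber hj hja hm hSr hSj hx
  rw [hfiber, Set.InjOn.ncard_image, Set.ncard_prod, Set.ncard_coe_finset, card_powersetCard,
    card_range, v_eq_ncard_avoiders]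
  refine (appendStairs_injOn _ _ _).mono ?_
  rintro ⟨S, x⟩ ⟨hS, hx, -, hL, -⟩
  exact ⟨(mem_powersetCard.mp hS).1.trans (range_subset_range.mpr (by omega)), hx.eq_zero⟩

lemma ncard_badExtensions (M a : ℕ) :
    (badExtensions M a).ncard = ∑ j ∈ Icc 2 (a - 1), ∑ m ∈ Icc (j + 1) (M + 2 - a),
      (m - 2).choose (j - 1) * v (M + 1 - m) (a - 1) := by
  classical
  have hfin : (badExtensions M a).Finite :=
    (finite_avoidersGE M (a - 1)).subset fun _ hf => hf.1
  rw [Set.ncard_eq_toFinset_card _ hfin,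
    card_eq_sum_card_fiberwise fun f hf => descentKey_mem (hfin.mem_toFinset.mp hf), sum_sigma]
  refine sum_congr rfl fun j hj => sum_congr rfl fun m hm => ?_
  rw [mem_Icc] at hj hm
  rw [← ncard_fiber_descentKey hj.1 hj.2 (by omega), ← Set.ncard_coe_finset]
  congr 1
  ext f
  simp

lemma v_one_one : v 1 1 = 1 := by
  rw [v_eq_ncard_avoiders, Set.ncard_eq_one]
  refine ⟨fun i => if i = 0 then 1 else 0, Set.eq_singleton_iff_unique_mem.mpr ⟨?_, ?_⟩⟩
  · refine ⟨⟨fun i hi => if_neg (by omega), fun i hi => ?_, fun _ => rfl,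
      fun i hi => by omega⟩, fun ⟨i, k, hk, hik, _⟩ => by omega, one_pos, rfl⟩
    simp [show i = 0 by omega]
  · rintro f ⟨hf, -, -, -⟩
    funext i
    split_ifs with hi
    · exact hi ▸ hf.map_zero one_pos
    · exact hf.eq_zero i (by omega)

lemma v_succ_one {M : ℕ} (hM : 0 < M) : v (M + 1) 1 = ∑ j ∈ Icc 1 M, v M j := by
  have hgood : avoidersGE M (1 - 1) \ badExtensions M 1 = avoidersGE M 1 := by
    ext f
    constructor
    · rintro ⟨⟨hf, hpat, -, -⟩, -⟩
      exact ⟨hf, hpat, hM, hf.one_le _ (by omega)⟩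
    · rintro ⟨hf, hpat, -, hlast⟩
      refine ⟨⟨hf, hpat, hM, by omega⟩, fun ⟨_, hbad⟩ => ?_⟩
      obtain ⟨p, hp, -, hp1⟩ := (hasPattern_update_iff hpat).mp hbad
      exact absurd (hf.one_le p (by omega)) (by omega)
  rw [v_eq_ncard_avoiders, avoiders_succ hM le_rfl, hgood, Set.InjOn.ncard_image,
    ncard_avoidersGE]
  exact (update_injOn 1).mono fun f hf => hf.1.eq_zero M le_rfl

lemma v_succ {M a : ℕ} (hM : 0 < M) (ha : 1 ≤ a) :
    (v (M + 1) a : ℤ) = ∑ j ∈ Icc (a - 1) M, (v M j : ℤ) -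
      ∑ j ∈ Icc 2 (a - 1), ∑ m ∈ Icc (j + 1) (M + 2 - a),
        ((m - 2).choose (j - 1) : ℤ) * (v (M + 1 - m) (a - 1) : ℤ) := by
  rw [v_eq_ncard_avoiders, ncard_avoiders_succ hM ha, ncard_avoidersGE, ncard_badExtensions]
  push_cast
  rfl

end CatalanWord21_3

theorem catalan_21_3_recurrence :
    v 1 1 = 1 ∧
    (∀ n : ℕ, 2 ≤ n → v n 1 = ∑ j ∈ Finset.Icc 1 (n - 1), v (n - 1) j) ∧
    ∀ n a : ℕ, 2 ≤ n → 2 ≤ a → a ≤ n →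
      (v n a : ℤ) = (∑ j ∈ Finset.Icc (a - 1) (n - 1), (v (n - 1) j : ℤ)) -
        ∑ j ∈ Finset.Icc 2 (a - 1), ∑ m ∈ Finset.Icc (j + 1) (n - a + 1),
          (Nat.choose (m - 2) (j - 1) : ℤ) * (v (n - m) (a - 1) : ℤ) := by
  refine ⟨CatalanWord21_3.v_one_one, fun n hn => ?_, fun n a hn ha han => ?_⟩
  · obtain ⟨M, rfl⟩ : ∃ M, n = M + 1 := ⟨n - 1, by omega⟩
    exact CatalanWord21_3.v_succ_one (by omega)
  · obtain ⟨M, rfl⟩ : ∃ M, n = M + 1 := ⟨n - 1, by omega⟩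
    rw [CatalanWord21_3.v_succ (by omega) (by omega), show M + 1 - a + 1 = M + 2 - a by omega]
    rfl
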